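/- For every integer M ≥ 2, the sum of the reciprocals of the nonzero Laplacian eigenvalues of the M-cycle satisfies Σ_{i=1}^{M−1} 1/(2 − 2·cos(2πi/M)) = (M² − 1)/12; equivalently, the average effective resistance of the cycle graph T_M equals R_ave(T_M) = M/12 − 1/(12M). -/

import Mathlib

/-!
Write `λ = 2 - 2 cos θ = 2 - z - z⁻¹` with `z = exp (iθ)` a nontrivial `M`-th root of unity.
The function `g j = j (M - j)` on `ℤ/M` has second difference `-2` away from `0`, so it is a
Green's function of the cycle Laplacian: its discrete Fourier transform `ĝ(z) = ∑ g j z ^ j`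
satisfies `λ ĝ(z) = -2M`. Hence `1/λ = -ĝ(z)/(2M)`, and summing over the nontrivial roots by
orthogonality of characters leaves `∑ g j / (2M) = (M² - 1)/12`.
-/

open Real Finset

/-- Average effective resistance of the cycle graph (1-dimensional toroidal grid) `T_M`. -/
noncomputable def RaveCycle (M : ℕ) : ℝ :=
  (1 / (M : ℝ)) * ∑ i ∈ Finset.Icc 1 (M - 1),
    1 / (2 - 2 * Real.cos (2 * Real.pi * i / M))

section CommRing

variable {R : Type*} [CommRing R]

theorem one_sub_mul_sum_range_natCast_mul_pow (z : R) (n : ℕ) :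
    (1 - z) * ∑ j ∈ range n, (j : R) * z ^ j =
      ∑ j ∈ range n, z ^ j - 1 - ((n : R) - 1) * z ^ n := by
  induction n with
  | zero => simp
  | succ n ih =>
    rw [sum_range_succ, sum_range_succ]
    push_cast
    linear_combination ih

theorem one_sub_mul_sum_range_natCast_sq_mul_pow (z : R) (n : ℕ) :
    (1 - z) * ∑ j ∈ range n, (j : R) ^ 2 * z ^ j =
      2 * ∑ j ∈ range n, (j : R) * z ^ j - (∑ j ∈ range n, z ^ j - 1) -
        ((n : R) - 1) ^ 2 * z ^ n := by
  induction n with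
  | zero => simp
  | succ n ih =>
    rw [sum_range_succ, sum_range_succ, sum_range_succ]
    push_cast
    linear_combination ih

theorem one_sub_sq_mul_sum_range_mul_sub_mul_pow {z : R} {n : ℕ} (hzn : z ^ n = 1)
    (hgeom : ∑ j ∈ range n, z ^ j = 0) :
    (1 - z) ^ 2 * ∑ j ∈ range n, (j : R) * (n - j) * z ^ j = 2 * n * z := by
  have h₁ := one_sub_mul_sum_range_natCast_mul_pow z n
  have h₂ := one_sub_mul_sum_range_natCast_sq_mul_pow z n
  rw [hgeom, hzn] at h₁ h₂
  have hsplit : ∑ j ∈ range n, (j : R) * (n - j) * z ^ j =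
      n * ∑ j ∈ range n, (j : R) * z ^ j - ∑ j ∈ range n, (j : R) ^ 2 * z ^ j := by
    rw [mul_sum, ← sum_sub_distrib]
    exact sum_congr rfl fun j _ => by ring
  rw [hsplit]
  linear_combination ((n : R) * (1 - z) - 2) * h₁ - (1 - z) * h₂

theorem six_mul_sum_range_natCast_mul_sub (m n : ℕ) :
    6 * ∑ j ∈ range n, (j : R) * (m - j) = n * (n - 1) * (3 * m - 2 * n + 1) := by
  induction n with
  | zero => simp
  | succ n ih =>
    rw [sum_range_succ, mul_add, ih]
    push_cast
    ring

end CommRing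

theorem IsPrimitiveRoot.geom_sum_pow_eq_zero {R : Type*} [CommRing R] [IsDomain R] {ζ : R}
    {n j : ℕ} (hζ : IsPrimitiveRoot ζ n) (hj₀ : 0 < j) (hjn : j < n) :
    ∑ i ∈ range n, (ζ ^ j) ^ i = 0 := by
  have hζj : 1 - ζ ^ j ≠ 0 := sub_ne_zero_of_ne (hζ.pow_ne_one_of_pos_of_lt hj₀.ne' hjn).symm
  refine eq_zero_of_ne_zero_of_mul_left_eq_zero hζj ?_
  rw [mul_neg_geom_sum, pow_right_comm, hζ.pow_eq_one, one_pow, sub_self]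

theorem sum_Icc_one_sub_one_eq_sum_range_sub {M : Type*} [AddCommGroup M] (f : ℕ → M) {n : ℕ}
    (hn : 0 < n) :
    ∑ k ∈ Icc 1 (n - 1), f k = ∑ k ∈ range n, f k - f 0 := by
  rw [sum_range_eq_add_Ico f hn, Icc_sub_one_right_eq_Ico_of_not_isMin (by simpa using hn.ne')]
  abel

theorem Complex.ofReal_two_sub_two_cos_mul_exp (θ : ℝ) :
    ((2 - 2 * Real.cos θ : ℝ) : ℂ) * Complex.exp (θ * Complex.I) =
      -(1 - Complex.exp (θ * Complex.I)) ^ 2 := by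
  have h : Complex.exp (θ * Complex.I) * Complex.exp (-θ * Complex.I) = 1 := by
    rw [← Complex.exp_add, neg_mul, add_neg_cancel, Complex.exp_zero]
  push_cast [Complex.ofReal_cos, Complex.cos]
  linear_combination -h

open Complex in
theorem ofReal_one_div_two_sub_two_cos_eq {M k : ℕ} (hk₀ : 0 < k) (hkM : k < M) :
    ((1 / (2 - 2 * Real.cos (2 * π * k / M)) : ℝ) : ℂ) =
      -(1 / (2 * M)) * ∑ j ∈ range M, (j : ℂ) * (M - j) * (exp (2 * π * I / M) ^ k) ^ j := by
  have hω := isPrimitiveRoot_exp M (by omega)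
  set z := exp (2 * π * I / M) ^ k with hz_def
  set G := ∑ j ∈ range M, (j : ℂ) * (M - j) * z ^ j
  set μ := ((2 - 2 * Real.cos (2 * π * k / M) : ℝ) : ℂ)
  have hz : z = exp ((2 * π * k / M : ℝ) * I) := by
    rw [hz_def, ← Complex.exp_nat_mul]
    push_cast
    ring_nf
  have hzM : z ^ M = 1 := by rw [hz_def, pow_right_comm, hω.pow_eq_one, one_pow]
  have hμz : μ * z = -(1 - z) ^ 2 := hz ▸ ofReal_two_sub_two_cos_mul_exp _
  have hG : (1 - z) ^ 2 * G = 2 * M * z :=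
    one_sub_sq_mul_sum_range_mul_sub_mul_pow hzM (hω.geom_sum_pow_eq_zero hk₀ hkM)
  have hz₀ : z ≠ 0 := pow_ne_zero _ (exp_ne_zero _)
  have hμG : μ * G = -2 * M := mul_right_cancel₀ hz₀ (by linear_combination G * hμz - hG)
  have hM : (M : ℂ) ≠ 0 := by exact_mod_cast (by omega : M ≠ 0)
  rw [ofReal_div, ofReal_one]
  refine (eq_one_div_of_mul_eq_one_left ?_).symm
  rw [mul_assoc, mul_comm G, hμG]
  field_simp

open Complex in
theorem sum_Icc_one_div_two_sub_two_cos {M : ℕ} (hM : 0 < M) :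
    ∑ k ∈ Icc 1 (M - 1), 1 / (2 - 2 * Real.cos (2 * π * k / M)) =
      ((M : ℝ) ^ 2 - 1) / 12 := by
  apply ofReal_injective
  have hω := isPrimitiveRoot_exp M hM.ne'
  set ω := exp (2 * π * I / M)
  have hchar : ∀ j ∈ range M,
      (j : ℂ) * (M - j) * ∑ k ∈ Icc 1 (M - 1), (ω ^ j) ^ k = -((j : ℂ) * (M - j)) := by
    intro j hj
    rw [sum_Icc_one_sub_one_eq_sum_range_sub _ hM, pow_zero]
    rcases j.eq_zero_or_pos with rfl | hj₀
    · simp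
    · rw [hω.geom_sum_pow_eq_zero hj₀ (mem_range.mp hj)]
      ring
  have hM' : (M : ℂ) ≠ 0 := by exact_mod_cast hM.ne'
  calc ((∑ k ∈ Icc 1 (M - 1), 1 / (2 - 2 * Real.cos (2 * π * k / M)) : ℝ) : ℂ)
      = ∑ k ∈ Icc 1 (M - 1),
          -(1 / (2 * M)) * ∑ j ∈ range M, (j : ℂ) * (M - j) * (ω ^ k) ^ j := by
        rw [ofReal_sum]
        refine sum_congr rfl fun k hk => ?_
        rw [mem_Icc] at hk
        exact ofReal_one_div_two_sub_two_cos_eq (by omega) (by omega)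
    _ = -(1 / (2 * M)) *
          ∑ j ∈ range M, (j : ℂ) * (M - j) * ∑ k ∈ Icc 1 (M - 1), (ω ^ j) ^ k := by
        rw [← mul_sum, sum_comm]
        simp_rw [mul_sum, pow_right_comm ω]
    _ = (1 / (12 * M)) * (6 * ∑ j ∈ range M, (j : ℂ) * (M - j)) := by
        rw [sum_congr rfl hchar, sum_neg_distrib]
        ring
    _ = (((M : ℝ) ^ 2 - 1) / 12 : ℝ) := by
        rw [six_mul_sum_range_natCast_mul_sub]
        push_cast
        field_simp
        ring

theorem cycle_resistance (M : ℕ) (hM : 2 ≤ M) :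
    (∑ i ∈ Finset.Icc 1 (M - 1), 1 / (2 - 2 * Real.cos (2 * Real.pi * i / M))
      = ((M : ℝ) ^ 2 - 1) / 12) ∧
    RaveCycle M = (M : ℝ) / 12 - 1 / (12 * M) := by
  have hsum := sum_Icc_one_div_two_sub_two_cos (M := M) (by omega)
  refine ⟨hsum, ?_⟩
  have hM : (M : ℝ) ≠ 0 := by positivity
  rw [RaveCycle, hsum]
  field_simp
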